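/- If X is a consistent set of FOCL sentences and ⟨ā⟩φ ∈ X, then the set Y_ā = {ψ : ⟨ā⟩ψ ∈ X} is consistent. -/
import Mathlib


/-- Terms: variables or constants. -/
inductive Tm (C : Type) : Type
  | var : ℕ → Tm C
  | const : C → Tm C
deriving DecidableEq

/-- Formulas of first-order coalition logic over a signature ⟨n, C, Ap⟩. -/
inductive Form (n : ℕ) (C : Type) (Ap : Type) : Type
  | atom : Ap → Form n C Ap
  | neg : Form n C Ap → Form n C Ap
  | and : Form n C Ap → Form n C Ap → Form n C Ap
  | box : (Fin n → Tm C) → Form n C Ap → Form n C Ap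
  | all : ℕ → Form n C Ap → Form n C Ap

namespace Form

variable {n : ℕ} {C Ap : Type}

def imp (φ ψ : Form n C Ap) : Form n C Ap := .neg (.and φ (.neg ψ))
def iff (φ ψ : Form n C Ap) : Form n C Ap := .and (imp φ ψ) (imp ψ φ)
def ex (x : ℕ) (φ : Form n C Ap) : Form n C Ap := .neg (.all x (.neg φ))

open Classical in
/-- Substitution of a term for a variable. -/
noncomputable def substT (t : Tm C) (x : ℕ) : Form n C Ap → Form n C Ap
  | .atom p => .atom p
  | .neg φ => .neg (substT t x φ)
  | .and φ ψ => .and (substT t x φ) (substT t x ψ)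
  | .box ts φ => .box (fun i => if ts i = .var x then t else ts i) (substT t x φ)
  | .all y φ => if y = x then .all y φ else .all y (substT t x φ)

/-- Substitution of a constant for a variable. -/
noncomputable def subst (a : C) (x : ℕ) (φ : Form n C Ap) : Form n C Ap := substT (.const a) x φ

/-- Free variables. -/
def FV : Form n C Ap → Finset ℕ
  | .atom _ => ∅
  | .neg φ => FV φ
  | .and φ ψ => FV φ ∪ FV ψ
  | .box ts φ => FV φ ∪ Finset.univ.biUnion (fun i => match ts i with | Tm.var x => {x} | _ => ∅)
  | .all y φ => FV φ \ {y}

/-- A sentence (closed formula). -/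
def closed (φ : Form n C Ap) : Prop := FV φ = ∅

/-- Universal closure of a formula. -/
def closure (φ : Form n C Ap) : Form n C Ap := ((FV φ).sort (· ≤ ·)).foldr Form.all φ

def size : Form n C Ap → ℕ
  | .atom _ => 1
  | .neg φ => size φ + 1
  | .and φ ψ => size φ + size ψ + 1
  | .box _ φ => size φ + 1
  | .all _ φ => size φ + 1

theorem size_substT (t : Tm C) (x : ℕ) (φ : Form n C Ap) :
    size (substT t x φ) = size φ := by
  induction φ with
  | atom p => rfl
  | neg φ ih => simp [substT, size, ih]
  | and φ ψ ih1 ih2 => simp [substT, size, ih1, ih2]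
  | box ts φ ih => simp [substT, size, ih]
  | all y φ ih => by_cases h : y = x <;> simp [substT, size, h, ih]

/-- Whether a term occurs in a formula. -/
def occursT (t : Tm C) : Form n C Ap → Prop
  | .atom _ => False
  | .neg φ => occursT t φ
  | .and φ ψ => occursT t φ ∨ occursT t ψ
  | .box ts φ => (∃ i, ts i = t) ∨ occursT t φ
  | .all y φ => (t = Tm.var y) ∨ occursT t φ

end Form

/-- A concurrent game structure over a signature ⟨n, C, Ap⟩ (actions = constants). -/
structure CGS (n : ℕ) (C : Type) (Ap : Type) where
  S : Type
  R : S → (Fin n → C) → S → Prop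
  V : Ap → S → Prop

namespace CGS

variable {n : ℕ} {C Ap : Type}

def Serial (G : CGS n C Ap) : Prop := ∀ s d, ∃ t, G.R s d t

def Functional (G : CGS n C Ap) : Prop := ∀ s d t v, G.R s d t → G.R s d v → t = v

end CGS

/-- Satisfaction of (closed) formulas in a CGS. -/
def Sat {n : ℕ} {C Ap : Type} (G : CGS n C Ap) : G.S → Form n C Ap → Prop
  | s, .atom p => G.V p s
  | s, .neg φ => ¬ Sat G s φ
  | s, .and φ ψ => Sat G s φ ∧ Sat G s ψ
  | s, .box ts φ => ∃ d : Fin n → C, (∀ i, ts i = Tm.const (d i)) ∧ ∃ t, G.R s d t ∧ Sat G t φ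
  | s, .all x φ => ∀ a : C, Sat G s (Form.subst a x φ)
termination_by _ φ => Form.size φ
decreasing_by all_goals simp [Form.subst, Form.size_substT, Form.size] <;> omega

/-- Truth of a possibly open formula: truth of its universal closure. -/
def SatC {n : ℕ} {C Ap : Type} (G : CGS n C Ap) (s : G.S) (φ : Form n C Ap) : Prop :=
  Sat G s (Form.closure φ)

/-- Validity in a CGS. -/
def ValidIn {n : ℕ} {C Ap : Type} (G : CGS n C Ap) (φ : Form n C Ap) : Prop :=
  ∀ s : G.S, SatC G s φ

/-- Propositional evaluation treating atoms, boxes and quantified formulas as atomic. -/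
def evalP {n : ℕ} {C Ap : Type} (v : Form n C Ap → Prop) : Form n C Ap → Prop
  | .neg φ => ¬ evalP v φ
  | .and φ ψ => evalP v φ ∧ evalP v ψ
  | .atom p => v (.atom p)
  | .box ts φ => v (.box ts φ)
  | .all x φ => v (.all x φ)

/-- Propositional tautologies. -/
def Taut {n : ℕ} {C Ap : Type} (φ : Form n C Ap) : Prop :=
  ∀ v : Form n C Ap → Prop, evalP v φ

/-- The axiom system of first-order coalition logic. -/
inductive Deriv {n : ℕ} {C Ap : Type} : Form n C Ap → Prop
  | PC {φ} : Taut φ → Deriv φ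
  | K (ts : Fin n → Tm C) (φ ψ) :
      Deriv (Form.iff (.and (.box ts φ) (.box ts ψ)) (.box ts (.and φ ψ)))
  | N (ts : Fin n → Tm C) (φ) :
      Deriv (Form.iff (.neg (.box ts φ)) (.box ts (.neg φ)))
  | E (x : ℕ) (t : Tm C) (φ) : Deriv (Form.imp (.all x φ) (Form.substT t x φ))
  | B (ts : Fin n → Tm C) (x : ℕ) (φ) (h : ∀ i, ts i ≠ Tm.var x) :
      Deriv (Form.imp (.all x (.box ts φ)) (.box ts (.all x φ)))
  | MP {φ ψ} : Deriv (Form.imp φ ψ) → Deriv φ → Deriv ψ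
  | Nec (ts : Fin n → Tm C) {φ} : Deriv φ → Deriv (.box ts φ)
  | Gen {φ ψ} (t : Tm C) (x : ℕ) :
      Deriv (Form.imp φ (Form.substT t x ψ)) → ¬ Form.occursT t φ →
      Deriv (Form.imp φ (.all x ψ))

/-- Derivability from a set of formulas. -/
def DerivFrom {n : ℕ} {C Ap : Type} (X : Set (Form n C Ap)) (φ : Form n C Ap) : Prop :=
  ∃ L : List (Form n C Ap), (∀ ψ ∈ L, ψ ∈ X) ∧ Deriv (L.foldr Form.imp φ)

def Consistent {n : ℕ} {C Ap : Type} (X : Set (Form n C Ap)) : Prop :=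
  ¬ ∃ φ, DerivFrom X φ ∧ DerivFrom X (.neg φ)

/-- A set of sentences. -/
def SentenceSet {n : ℕ} {C Ap : Type} (X : Set (Form n C Ap)) : Prop :=
  ∀ φ ∈ X, Form.closed φ

/-- Maximal consistent set (of sentences). -/
def MCS {n : ℕ} {C Ap : Type} (X : Set (Form n C Ap)) : Prop :=
  Consistent X ∧ ∀ ψ, Form.closed ψ → ψ ∉ X → ¬ Consistent (insert ψ X)

/-- The ∀-property. -/
def AllProp {n : ℕ} {C Ap : Type} (X : Set (Form n C Ap)) : Prop :=
  ∀ (φ : Form n C Ap) (x : ℕ), Form.FV φ ⊆ {x} →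
    ∃ a : C, Form.imp (Form.subst a x φ) (.all x φ) ∈ X

/-- The canonical model. -/
def canonical (n : ℕ) (C Ap : Type) : CGS n C Ap where
  S := {X : Set (Form n C Ap) // SentenceSet X ∧ MCS X ∧ AllProp X}
  R := fun X d Y => ∀ φ, φ ∈ Y.1 → Form.box (fun i => Tm.const (d i)) φ ∈ X.1
  V := fun p X => Form.atom p ∈ X.1

/-- Renaming of constants. -/
def Tm.mapC {C C' : Type} (f : C → C') : Tm C → Tm C'
  | .var x => .var x
  | .const c => .const (f c)

def Form.mapC {n : ℕ} {C C' Ap : Type} (f : C → C') : Form n C Ap → Form n C' Ap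
  | .atom p => .atom p
  | .neg φ => .neg (mapC f φ)
  | .and φ ψ => .and (mapC f φ) (mapC f ψ)
  | .box ts φ => .box (fun i => (ts i).mapC f) (mapC f φ)
  | .all y φ => .all y (mapC f φ)



section Aux
variable {n : ℕ} {C Ap : Type}

lemma evalP_imp (v : Form n C Ap → Prop) (φ ψ : Form n C Ap) :
    evalP v (Form.imp φ ψ) ↔ (evalP v φ → evalP v ψ) := by
  simp only [Form.imp, evalP]; tauto

lemma evalP_foldr (v : Form n C Ap → Prop) (L : List (Form n C Ap)) (χ : Form n C Ap) :
    evalP v (L.foldr Form.imp χ) ↔ ((∀ ψ ∈ L, evalP v ψ) → evalP v χ) := by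
  induction L with
  | nil => simp
  | cons ψ L ih =>
    simp only [List.foldr_cons, evalP_imp, ih, List.mem_cons]
    constructor
    · intro h hall; exact h (hall ψ (Or.inl rfl)) (fun ρ hρ => hall ρ (Or.inr hρ))
    · intro h h1 h2; exact h (by rintro ρ (rfl | hρ); exact h1; exact h2 ρ hρ)

lemma DerivMono (ts : Fin n → Tm C) {φ ψ : Form n C Ap} (h : Deriv (Form.imp φ ψ)) :
    Deriv (Form.imp (.box ts φ) (.box ts ψ)) := by
  have h1 : Deriv (Form.box ts (Form.neg (Form.and φ (Form.neg ψ)))) := Deriv.Nec ts h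
  have hN1 := Deriv.N ts (Form.and φ (Form.neg ψ))
  have hK := Deriv.K ts φ (Form.neg ψ)
  have hN2 := Deriv.N ts ψ
  have taut : Deriv (Form.imp (Form.box ts (Form.neg (Form.and φ (Form.neg ψ))))
      (Form.imp (Form.iff (.neg (.box ts (Form.and φ (Form.neg ψ)))) (.box ts (.neg (Form.and φ (Form.neg ψ)))))
      (Form.imp (Form.iff (.and (.box ts φ) (.box ts (Form.neg ψ))) (.box ts (.and φ (.neg ψ))))
      (Form.imp (Form.iff (.neg (.box ts ψ)) (.box ts (.neg ψ)))
      (Form.imp (.box ts φ) (.box ts ψ)))))) := by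
    apply Deriv.PC
    intro v
    simp only [Form.imp, Form.iff, evalP]
    tauto
  exact ((taut.MP h1).MP hN1 |>.MP hK).MP hN2

lemma box_foldr_aux (ts : Fin n → Tm C) :
    ∀ (L : List (Form n C Ap)) (σ χ : Form n C Ap),
      Deriv (Form.imp σ (L.foldr Form.imp χ)) →
      Deriv (Form.imp (.box ts σ) ((L.map (Form.box ts)).foldr Form.imp (.box ts χ)))
  | [], σ, χ, h => DerivMono ts h
  | ψ :: L, σ, χ, h => by
    have h' : Deriv (Form.imp (Form.and σ ψ) (L.foldr Form.imp χ)) := by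
      refine Deriv.MP (Deriv.PC ?_) h
      intro v; simp only [Form.imp, evalP]; tauto
    have ih := box_foldr_aux ts L (Form.and σ ψ) χ h'
    have hK := Deriv.K ts σ ψ
    have taut : Deriv (Form.imp (Form.iff (.and (.box ts σ) (.box ts ψ)) (.box ts (.and σ ψ)))
        (Form.imp (Form.imp (.box ts (.and σ ψ)) ((L.map (Form.box ts)).foldr Form.imp (.box ts χ)))
        (Form.imp (.box ts σ) (Form.imp (.box ts ψ) ((L.map (Form.box ts)).foldr Form.imp (.box ts χ)))))) := by
      apply Deriv.PC
      intro v; simp only [Form.imp, Form.iff, evalP]; tauto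
    simpa using (taut.MP hK).MP ih

lemma box_foldr (ts : Fin n → Tm C) (L : List (Form n C Ap)) (χ : Form n C Ap)
    (h : Deriv (L.foldr Form.imp χ)) :
    Deriv ((L.map (Form.box ts)).foldr Form.imp (.box ts χ)) := by
  have hT : Deriv (Form.imp χ χ) := by
    apply Deriv.PC; intro v; simp only [Form.imp, evalP]; tauto
  have h' : Deriv (Form.imp (Form.imp χ χ) (L.foldr Form.imp χ)) := by
    refine Deriv.MP (Deriv.PC ?_) h
    intro v; simp only [Form.imp, evalP]; tauto
  have := box_foldr_aux ts L (Form.imp χ χ) χ h'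
  exact this.MP (Deriv.Nec ts hT)

end Aux

/-- if X is consistent and ⟨ā⟩φ ∈ X, then {ψ : ⟨ā⟩ψ ∈ X} is consistent. -/
theorem unbox_consistent {n : ℕ} {C Ap : Type}
    (X : Set (Form n C Ap)) (hX : SentenceSet X) (hcons : Consistent X)
    (d : Fin n → C) (φ : Form n C Ap)
    (hmem : Form.box (fun i => Tm.const (d i)) φ ∈ X) :
    Consistent {ψ | Form.box (fun i => Tm.const (d i)) ψ ∈ X} := by
  rintro ⟨χ, ⟨L1, hL1, d1⟩, ⟨L2, hL2, d2⟩⟩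
  set ts : Fin n → Tm C := fun i => Tm.const (d i) with hts
  -- Step A: (L1 ++ L2) ⊢ ¬φ
  have stepA : Deriv ((L1 ++ L2).foldr Form.imp (Form.neg φ)) := by
    have taut : Deriv (Form.imp (L1.foldr Form.imp χ)
        (Form.imp (L2.foldr Form.imp (Form.neg χ))
        ((L1 ++ L2).foldr Form.imp (Form.neg φ)))) := by
      apply Deriv.PC
      intro v
      simp only [evalP_imp, evalP_foldr]
      intro h1 h2 hall
      have a1 := h1 (fun ρ hρ => hall ρ (List.mem_append.2 (Or.inl hρ)))
      have a2 := h2 (fun ρ hρ => hall ρ (List.mem_append.2 (Or.inr hρ)))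
      simp only [evalP] at a2 ⊢
      exact absurd a1 a2
    exact (taut.MP d1).MP d2
  -- Step B: box everything
  have stepB : Deriv (((L1 ++ L2).map (Form.box ts)).foldr Form.imp (.box ts (Form.neg φ))) :=
    box_foldr ts _ _ stepA
  -- Step C: replace ⟨ts⟩¬φ by ¬⟨ts⟩φ using axiom N
  have stepC : Deriv (((L1 ++ L2).map (Form.box ts)).foldr Form.imp (Form.neg (.box ts φ))) := by
    have hN := Deriv.N ts φ
    have taut : Deriv (Form.imp (Form.iff (.neg (.box ts φ)) (.box ts (.neg φ)))
        (Form.imp (((L1 ++ L2).map (Form.box ts)).foldr Form.imp (.box ts (Form.neg φ)))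
        (((L1 ++ L2).map (Form.box ts)).foldr Form.imp (Form.neg (.box ts φ))))) := by
      apply Deriv.PC
      intro v
      simp only [evalP_imp, evalP_foldr, Form.iff, Form.imp, evalP]
      tauto
    exact (taut.MP hN).MP stepB
  -- Contradiction with consistency of X
  apply hcons
  refine ⟨Form.box ts φ, ⟨[Form.box ts φ], ?_, ?_⟩, ?_⟩
  · intro ψ hψ; simp at hψ; subst hψ; exact hmem
  · simp only [List.foldr]
    apply Deriv.PC; intro v; simp only [Form.imp, evalP]; tauto
  · refine ⟨(L1 ++ L2).map (Form.box ts), ?_, stepC⟩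
    intro ψ hψ
    simp only [List.mem_map, List.mem_append] at hψ
    obtain ⟨ρ, hρ, rfl⟩ := hψ
    rcases hρ with hρ | hρ
    · exact hL1 ρ hρ
    · exact hL2 ρ hρ
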